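/- arXiv:2601.05928 — 4 statements merged into one kernel-verified Lean document; each statement's English description precedes it below -/
import Mathlib

section
/- The matrix F_h := W^{1/2} F_w W^{−1/2}, where F_w := (1/2)(P D + D P) − (1/2) W^{−1} B P, is real skew-symmetric (F_hᵀ = −F_h) and tridiagonal ((F_h)_{jk} = 0 whenever |j − k| ≥ 2); moreover all diagonal entries of F_h vanish. -/
open Matrix

noncomputable def sbpWeight (M : ℕ) (p : ℕ → ℝ) (j : ℕ) : ℝ :=
  if j = 0 then (p 1 - p 0) / 2
  else if j = M then (p M - p (M - 1)) / 2
  else (p (j + 1) - p (j - 1)) / 2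

noncomputable def sbpW (M : ℕ) (p : ℕ → ℝ) : Matrix (Fin (M + 1)) (Fin (M + 1)) ℝ :=
  Matrix.diagonal fun j => sbpWeight M p (j : ℕ)

noncomputable def sbpQ (M : ℕ) : Matrix (Fin (M + 1)) (Fin (M + 1)) ℝ :=
  Matrix.of fun i j =>
    if (i : ℕ) + 1 = (j : ℕ) then 1 / 2
    else if (j : ℕ) + 1 = (i : ℕ) then -(1 / 2)
    else if (i : ℕ) = 0 ∧ (j : ℕ) = 0 then -(1 / 2)
    else if (i : ℕ) = M ∧ (j : ℕ) = M then 1 / 2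
    else 0

noncomputable def sbpD (M : ℕ) (p : ℕ → ℝ) : Matrix (Fin (M + 1)) (Fin (M + 1)) ℝ :=
  (sbpW M p)⁻¹ * sbpQ M

noncomputable def sbpB (M : ℕ) : Matrix (Fin (M + 1)) (Fin (M + 1)) ℝ :=
  Matrix.diagonal fun j => if (j : ℕ) = 0 then -1 else if (j : ℕ) = M then 1 else 0

/-- The diagonal matrix `P := diag(p_0, …, p_M)`. -/
noncomputable def sbpP (M : ℕ) (p : ℕ → ℝ) : Matrix (Fin (M + 1)) (Fin (M + 1)) ℝ :=
  Matrix.diagonal fun j => p (j : ℕ)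

/-- `F_w := (1/2)(P D + D P) − (1/2) W⁻¹ B P`. -/
noncomputable def sbpFw (M : ℕ) (p : ℕ → ℝ) : Matrix (Fin (M + 1)) (Fin (M + 1)) ℝ :=
  (1 / 2 : ℝ) • (sbpP M p * sbpD M p + sbpD M p * sbpP M p) -
    (1 / 2 : ℝ) • ((sbpW M p)⁻¹ * sbpB M * sbpP M p)

/-- `W^{1/2}`, the diagonal square root of the weight matrix. -/
noncomputable def sbpWhalf (M : ℕ) (p : ℕ → ℝ) : Matrix (Fin (M + 1)) (Fin (M + 1)) ℝ :=
  Matrix.diagonal fun j => Real.sqrt (sbpWeight M p (j : ℕ))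

/-- `W^{-1/2}`, the diagonal inverse square root of the weight matrix. -/
noncomputable def sbpWhalfInv (M : ℕ) (p : ℕ → ℝ) : Matrix (Fin (M + 1)) (Fin (M + 1)) ℝ :=
  Matrix.diagonal fun j => (Real.sqrt (sbpWeight M p (j : ℕ)))⁻¹

/-- `F_h := W^{1/2} F_w W^{−1/2}`. -/
noncomputable def sbpFh (M : ℕ) (p : ℕ → ℝ) : Matrix (Fin (M + 1)) (Fin (M + 1)) ℝ :=
  sbpWhalf M p * sbpFw M p * sbpWhalfInv M p

lemma weight_pos (M : ℕ) (hM : 1 ≤ M) (p : ℕ → ℝ)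
    (hmono : ∀ i, i < M → p i < p (i + 1)) :
    ∀ j, j ≤ M → 0 < sbpWeight M p j := by
  intro j hj
  unfold sbpWeight
  by_cases h0 : j = 0
  · rw [if_pos h0]
    have := hmono 0 hM
    linarith
  · rw [if_neg h0]
    by_cases hMj : j = M
    · rw [if_pos hMj]
      have h1 : M - 1 < M := by omega
      have := hmono (M - 1) h1
      have h2 : M - 1 + 1 = M := by omega
      rw [h2] at this
      linarith
    · rw [if_neg hMj]
      have hjM : j < M := lt_of_le_of_ne hj hMj
      have h1 := hmono (j - 1) (by omega)
      have h2 := hmono j hjM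
      have h3 : j - 1 + 1 = j := by omega
      rw [h3] at h1
      linarith

lemma sbpW_inv (M : ℕ) (p : ℕ → ℝ) (hw : ∀ j : Fin (M + 1), sbpWeight M p (j : ℕ) ≠ 0) :
    (sbpW M p)⁻¹ = Matrix.diagonal (fun j : Fin (M + 1) => (sbpWeight M p (j : ℕ))⁻¹) := by
  apply Matrix.inv_eq_right_inv
  rw [sbpW, Matrix.diagonal_mul_diagonal]
  have : (fun i : Fin (M + 1) => sbpWeight M p (i : ℕ) * (sbpWeight M p (i : ℕ))⁻¹) =
      fun _ => (1 : ℝ) := funext fun j => mul_inv_cancel₀ (hw j)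
  rw [this, Matrix.diagonal_one]

lemma sbpFh_apply (M : ℕ) (p : ℕ → ℝ) (hw : ∀ j : Fin (M + 1), sbpWeight M p (j : ℕ) ≠ 0)
    (i j : Fin (M + 1)) :
    sbpFh M p i j =
      Real.sqrt (sbpWeight M p (i : ℕ)) *
        ((1 / 2) * ((p (i : ℕ) + p (j : ℕ)) * ((sbpWeight M p (i : ℕ))⁻¹ * sbpQ M i j)) -
          (1 / 2) * ((sbpWeight M p (i : ℕ))⁻¹ *
              (if (i : ℕ) = 0 then (-1 : ℝ) else if (i : ℕ) = M then 1 else 0) *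
              (if i = j then p (j : ℕ) else 0))) *
        (Real.sqrt (sbpWeight M p (j : ℕ)))⁻¹ := by
  rw [sbpFh, sbpWhalf, sbpWhalfInv, Matrix.mul_diagonal, Matrix.diagonal_mul]
  congr 1
  rw [sbpFw, sbpD, sbpW_inv M p hw]
  simp only [Matrix.sub_apply, Matrix.smul_apply, Matrix.add_apply, sbpP, sbpB,
    Matrix.diagonal_mul, Matrix.mul_diagonal, Matrix.diagonal_apply, smul_eq_mul]
  by_cases h : i = j
  · subst h
    rw [if_pos rfl, if_pos rfl]
    ring
  · rw [if_neg h, if_neg h]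
    ring

lemma sqrt_mul_inv_self (w : ℝ) (hw : 0 < w) :
    Real.sqrt w * w⁻¹ = (Real.sqrt w)⁻¹ := by
  rw [show w⁻¹ = (Real.sqrt w)⁻¹ * (Real.sqrt w)⁻¹ by
      rw [← mul_inv, Real.mul_self_sqrt hw.le],
    ← mul_assoc, mul_inv_cancel₀ (ne_of_gt (Real.sqrt_pos.mpr hw)), one_mul]

/-- `F_h` is real skew-symmetric and tridiagonal, with vanishing diagonal. -/
theorem sbpFh_skew_tridiagonal (M : ℕ) (hM : 1 ≤ M) (p : ℕ → ℝ) (hp0 : 0 < p 0)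
    (hmono : ∀ i, i < M → p i < p (i + 1)) :
    (sbpFh M p)ᵀ = -sbpFh M p ∧
    (∀ i j : Fin (M + 1), ((i : ℕ) + 2 ≤ (j : ℕ) ∨ (j : ℕ) + 2 ≤ (i : ℕ)) →
      sbpFh M p i j = 0) ∧
    (∀ j : Fin (M + 1), sbpFh M p j j = 0) := by
  have wpos : ∀ j : Fin (M + 1), 0 < sbpWeight M p (j : ℕ) := fun j =>
    weight_pos M hM p hmono (j : ℕ) (by omega)
  have hw : ∀ j : Fin (M + 1), sbpWeight M p (j : ℕ) ≠ 0 := fun j => (wpos j).ne'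
  -- diagonal vanishes
  have hdiag : ∀ j : Fin (M + 1), sbpFh M p j j = 0 := by
    intro j
    rw [sbpFh_apply M p hw]
    have hQ : sbpQ M j j =
        if (j : ℕ) = 0 then -(1 / 2 : ℝ) else if (j : ℕ) = M then 1 / 2 else 0 := by
      simp only [sbpQ, Matrix.of_apply]
      rw [if_neg (by omega), if_neg (by omega)]
      by_cases h0 : (j : ℕ) = 0
      · rw [if_pos ⟨h0, h0⟩, if_pos h0]
      · rw [if_neg (by simp [h0]), if_neg h0]
        by_cases hMj : (j : ℕ) = M
        · rw [if_pos ⟨hMj, hMj⟩, if_pos hMj]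
        · rw [if_neg (by simp [hMj]), if_neg hMj]
    rw [hQ, if_pos rfl]
    by_cases h0 : (j : ℕ) = 0
    · rw [if_pos h0, if_pos h0]
      ring
    · rw [if_neg h0, if_neg h0]
      by_cases hMj : (j : ℕ) = M
      · rw [if_pos hMj, if_pos hMj]
        ring
      · rw [if_neg hMj, if_neg hMj]
        ring
  -- far off-diagonal vanishes
  have hfar : ∀ i j : Fin (M + 1), ((i : ℕ) + 2 ≤ (j : ℕ) ∨ (j : ℕ) + 2 ≤ (i : ℕ)) →
      sbpFh M p i j = 0 := by
    intro i j hij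
    rw [sbpFh_apply M p hw]
    have hQ : sbpQ M i j = 0 := by
      simp only [sbpQ, Matrix.of_apply]
      rw [if_neg (by omega), if_neg (by omega), if_neg (by omega), if_neg (by omega)]
    have hne : i ≠ j := by
      intro h; subst h; omega
    rw [hQ, if_neg hne]
    ring
  refine ⟨?_, hfar, hdiag⟩
  ext i j
  rw [Matrix.transpose_apply, Matrix.neg_apply]
  rcases lt_trichotomy ((j : ℕ)) ((i : ℕ)) with h | h | h
  · rcases Nat.lt_or_ge ((j : ℕ) + 1) ((i : ℕ)) with h2 | h2
    · rw [hfar j i (Or.inl (by omega)), hfar i j (Or.inr (by omega))]; ring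
    · -- i = j + 1
      have hij : (j : ℕ) + 1 = (i : ℕ) := by omega
      rw [sbpFh_apply M p hw, sbpFh_apply M p hw]
      have hQ1 : sbpQ M j i = 1 / 2 := by
        simp only [sbpQ, Matrix.of_apply]
        rw [if_pos hij]
      have hQ2 : sbpQ M i j = -(1 / 2) := by
        simp only [sbpQ, Matrix.of_apply]
        rw [if_neg (by omega), if_pos hij]
      have hne1 : j ≠ i := by intro hh; rw [hh] at h; omega
      have hne2 : i ≠ j := fun hh => hne1 hh.symm
      rw [hQ1, hQ2, if_neg hne1, if_neg hne2]
      have si := sqrt_mul_inv_self _ (wpos i)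
      have sj := sqrt_mul_inv_self _ (wpos j)
      linear_combination ((p (i : ℕ) + p (j : ℕ)) / 4 *
          (Real.sqrt (sbpWeight M p (i : ℕ)))⁻¹) * sj -
        ((p (i : ℕ) + p (j : ℕ)) / 4 * (Real.sqrt (sbpWeight M p (j : ℕ)))⁻¹) * si
  · have : j = i := Fin.ext h
    subst this
    rw [hdiag j]; ring
  · rcases Nat.lt_or_ge ((i : ℕ) + 1) ((j : ℕ)) with h2 | h2
    · rw [hfar j i (Or.inr (by omega)), hfar i j (Or.inl (by omega))]; ring
    · have hij : (i : ℕ) + 1 = (j : ℕ) := by omega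
      rw [sbpFh_apply M p hw, sbpFh_apply M p hw]
      have hQ1 : sbpQ M i j = 1 / 2 := by
        simp only [sbpQ, Matrix.of_apply]
        rw [if_pos hij]
      have hQ2 : sbpQ M j i = -(1 / 2) := by
        simp only [sbpQ, Matrix.of_apply]
        rw [if_neg (by omega), if_pos hij]
      have hne1 : j ≠ i := by intro hh; rw [hh] at h; omega
      have hne2 : i ≠ j := fun hh => hne1 hh.symm
      rw [hQ1, hQ2, if_neg hne1, if_neg hne2]
      have si := sqrt_mul_inv_self _ (wpos i)
      have sj := sqrt_mul_inv_self _ (wpos j)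
      linear_combination (-((p (i : ℕ) + p (j : ℕ)) / 4) *
          (Real.sqrt (sbpWeight M p (i : ℕ)))⁻¹) * sj +
        ((p (i : ℕ) + p (j : ℕ)) / 4 * (Real.sqrt (sbpWeight M p (j : ℕ)))⁻¹) * si
end

section
/- For any grid 0 < p_0 < p_1 < ⋯ < p_M, the residual vector 2 F_h r_h − r_h is supported on the two boundary nodes: explicitly, 2 F_h r_h − r_h = (1/Z_h) · [ (p_0/√(w_0)) e_0 − (p_M/√(w_M)) e_M ]. In particular, all components of 2 F_h r_h − r_h at the interior indices 1 ≤ j ≤ M−1 vanish. -/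
open Matrix

/-- The normalization `Z_h := (Σ_j w_j)^{1/2}`. -/
noncomputable def sbpZ (M : ℕ) (p : ℕ → ℝ) : ℝ :=
  Real.sqrt (∑ j : Fin (M + 1), sbpWeight M p (j : ℕ))

/-- The right vector `r_h := (1/Z_h) Σ_j √(w_j) e_j`. -/
noncomputable def sbpR (M : ℕ) (p : ℕ → ℝ) : Fin (M + 1) → ℝ :=
  fun j => Real.sqrt (sbpWeight M p (j : ℕ)) / sbpZ M p

lemma sbpWeight_pos (M : ℕ) (hM : 1 ≤ M) (p : ℕ → ℝ)
    (hmono : ∀ i, i < M → p i < p (i + 1)) {j : ℕ} (hj : j ≤ M) :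
    0 < sbpWeight M p j := by
  unfold sbpWeight
  split_ifs with h0 hMM
  · have := hmono 0 hM; linarith
  · have h := hmono (M - 1) (by omega)
    rw [show M - 1 + 1 = M by omega] at h; linarith
  · have h1 := hmono (j - 1) (by omega)
    have h2 := hmono j (by omega)
    rw [show j - 1 + 1 = j by omega] at h1; linarith

lemma sbpQ_mulVec (M : ℕ) (hM : 1 ≤ M) (x : Fin (M + 1) → ℝ) (j : Fin (M + 1)) :
    (sbpQ M *ᵥ x) j =
      (x ⟨min ((j : ℕ) + 1) M, by omega⟩ - x ⟨(j : ℕ) - 1, by omega⟩) / 2 := by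
  set b : Fin (M + 1) := ⟨min ((j : ℕ) + 1) M, by omega⟩ with hb
  set a : Fin (M + 1) := ⟨(j : ℕ) - 1, by omega⟩ with ha
  have hrow : ∀ k : Fin (M + 1), sbpQ M j k =
      (if k = b then (1 : ℝ) / 2 else 0) + (if k = a then -(1 / 2) else 0) := by
    intro k
    have hj := j.isLt
    have hk := k.isLt
    simp only [sbpQ, Matrix.of_apply, Fin.ext_iff, hb, ha]
    split_ifs <;> (try norm_num) <;> omega
  simp only [mulVec, dotProduct, hrow, add_mul, ite_mul, zero_mul,
    Finset.sum_add_distrib, Finset.sum_ite_eq', Finset.mem_univ, if_true]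
  ring

/-- The residual vector `2 F_h r_h − r_h` is supported on the two
boundary nodes: `2 F_h r_h − r_h = (1/Z_h)·[(p_0/√w_0) e_0 − (p_M/√w_M) e_M]`.
In particular, all interior components `1 ≤ j ≤ M−1` vanish. -/
theorem sbp_residual_boundary (M : ℕ) (hM : 1 ≤ M) (p : ℕ → ℝ) (hp0 : 0 < p 0)
    (hmono : ∀ i, i < M → p i < p (i + 1)) :
    (∀ j : Fin (M + 1),
      2 * (sbpFh M p *ᵥ sbpR M p) j - sbpR M p j =
        (1 / sbpZ M p) *
          (if (j : ℕ) = 0 then p 0 / Real.sqrt (sbpWeight M p 0)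
            else if (j : ℕ) = M then -(p M / Real.sqrt (sbpWeight M p M))
            else 0)) ∧
    (∀ j : Fin (M + 1), 0 < (j : ℕ) → (j : ℕ) < M →
      2 * (sbpFh M p *ᵥ sbpR M p) j - sbpR M p j = 0) := by
  have hw : ∀ j : Fin (M + 1), 0 < sbpWeight M p (j : ℕ) := fun j =>
    sbpWeight_pos M hM p hmono (by omega)
  have hwne : ∀ j : Fin (M + 1), sbpWeight M p (j : ℕ) ≠ 0 := fun j => (hw j).ne'
  have hs : ∀ j : Fin (M + 1), Real.sqrt (sbpWeight M p (j : ℕ)) ≠ 0 := fun j =>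
    (Real.sqrt_pos.mpr (hw j)).ne'
  have hss : ∀ j : Fin (M + 1),
      Real.sqrt (sbpWeight M p (j : ℕ)) * Real.sqrt (sbpWeight M p (j : ℕ)) =
        sbpWeight M p (j : ℕ) := fun j => Real.mul_self_sqrt (hw j).le
  have hWinv : (sbpW M p)⁻¹ =
      Matrix.diagonal (fun j : Fin (M + 1) => (sbpWeight M p (j : ℕ))⁻¹) := by
    apply Matrix.inv_eq_right_inv
    rw [sbpW, Matrix.diagonal_mul_diagonal,
      show (fun i : Fin (M + 1) => sbpWeight M p (i : ℕ) * (sbpWeight M p (i : ℕ))⁻¹) =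
        fun _ => (1 : ℝ) from funext fun i => mul_inv_cancel₀ (hwne i),
      Matrix.diagonal_one]
  -- Q row sums
  have hQ1 : sbpQ M *ᵥ (fun _ : Fin (M + 1) => (1 : ℝ)) = 0 := by
    funext j; rw [sbpQ_mulVec M hM]; simp
  have hQp : sbpQ M *ᵥ (fun k : Fin (M + 1) => p (k : ℕ)) =
      fun j : Fin (M + 1) => sbpWeight M p (j : ℕ) := by
    funext j
    rw [sbpQ_mulVec M hM]
    have hj := j.isLt
    simp only [sbpWeight]
    split_ifs with h0 hMM
    · rw [show min ((j : ℕ) + 1) M = 1 by omega, show (j : ℕ) - 1 = 0 by omega]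
    · rw [show min ((j : ℕ) + 1) M = M by omega, hMM]
    · rw [show min ((j : ℕ) + 1) M = (j : ℕ) + 1 by omega]
  have hP1 : sbpP M p *ᵥ (fun _ : Fin (M + 1) => (1 : ℝ)) =
      fun k : Fin (M + 1) => p (k : ℕ) := by
    funext k; simp [sbpP, mulVec_diagonal]
  have e1 : (sbpP M p * sbpD M p) *ᵥ (fun _ : Fin (M + 1) => (1 : ℝ)) = 0 := by
    rw [← mulVec_mulVec, sbpD, hWinv, ← mulVec_mulVec, hQ1, mulVec_zero, mulVec_zero]
  have e2 : (sbpD M p * sbpP M p) *ᵥ (fun _ : Fin (M + 1) => (1 : ℝ)) =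
      fun _ : Fin (M + 1) => (1 : ℝ) := by
    rw [← mulVec_mulVec, hP1, sbpD, hWinv, ← mulVec_mulVec, hQp]
    funext j; rw [mulVec_diagonal]; exact inv_mul_cancel₀ (hwne j)
  have e3 : ((sbpW M p)⁻¹ * sbpB M * sbpP M p) *ᵥ (fun _ : Fin (M + 1) => (1 : ℝ)) =
      fun j : Fin (M + 1) => (sbpWeight M p (j : ℕ))⁻¹ *
        ((if (j : ℕ) = 0 then -1 else if (j : ℕ) = M then 1 else 0) * p (j : ℕ)) := by
    rw [hWinv, ← mulVec_mulVec, ← mulVec_mulVec, hP1]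
    funext j
    rw [mulVec_diagonal]
    congr 1
    rw [sbpB, mulVec_diagonal]
  have hFw1 : sbpFw M p *ᵥ (fun _ : Fin (M + 1) => (1 : ℝ)) =
      fun j : Fin (M + 1) => 1 / 2 - 1 / 2 * ((sbpWeight M p (j : ℕ))⁻¹ *
        ((if (j : ℕ) = 0 then -1 else if (j : ℕ) = M then 1 else 0) * p (j : ℕ))) := by
    rw [sbpFw, sub_mulVec, smul_mulVec, smul_mulVec, add_mulVec, e1, e2, e3]
    funext j
    simp only [Pi.sub_apply, Pi.smul_apply, Pi.add_apply, Pi.zero_apply, smul_eq_mul]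
    ring
  have h1 : sbpWhalfInv M p *ᵥ sbpR M p = fun _ : Fin (M + 1) => (sbpZ M p)⁻¹ := by
    funext j
    rw [sbpWhalfInv, mulVec_diagonal, sbpR, div_eq_mul_inv, inv_mul_cancel_left₀ (hs j)]
  have hFhr : ∀ j : Fin (M + 1), (sbpFh M p *ᵥ sbpR M p) j =
      Real.sqrt (sbpWeight M p (j : ℕ)) * ((sbpZ M p)⁻¹ *
        (1 / 2 - 1 / 2 * ((sbpWeight M p (j : ℕ))⁻¹ *
          ((if (j : ℕ) = 0 then -1 else if (j : ℕ) = M then 1 else 0) * p (j : ℕ))))) := by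
    intro j
    rw [sbpFh, ← mulVec_mulVec, ← mulVec_mulVec, h1,
      show (fun _ : Fin (M + 1) => (sbpZ M p)⁻¹) =
        (sbpZ M p)⁻¹ • (fun _ : Fin (M + 1) => (1 : ℝ)) by funext k; simp,
      mulVec_smul, hFw1, sbpWhalf]
    rw [mulVec_diagonal]
    simp only [Pi.smul_apply, smul_eq_mul]
  have key : ∀ j : Fin (M + 1),
      Real.sqrt (sbpWeight M p (j : ℕ)) * (sbpWeight M p (j : ℕ))⁻¹ =
        (Real.sqrt (sbpWeight M p (j : ℕ)))⁻¹ := by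
    intro j
    have h2 : (sbpWeight M p (j : ℕ))⁻¹ =
        (Real.sqrt (sbpWeight M p (j : ℕ)))⁻¹ * (Real.sqrt (sbpWeight M p (j : ℕ)))⁻¹ := by
      rw [← mul_inv, hss j]
    rw [h2, ← mul_assoc, mul_inv_cancel₀ (hs j), one_mul]
  have main : ∀ j : Fin (M + 1),
      2 * (sbpFh M p *ᵥ sbpR M p) j - sbpR M p j =
        (1 / sbpZ M p) *
          (if (j : ℕ) = 0 then p 0 / Real.sqrt (sbpWeight M p 0)
            else if (j : ℕ) = M then -(p M / Real.sqrt (sbpWeight M p M))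
            else 0) := by
    intro j
    rw [hFhr j, sbpR]
    by_cases h0 : (j : ℕ) = 0
    · simp only [h0, if_true]
      rw [div_eq_mul_inv, div_eq_mul_inv, one_div]
      have k := key j
      rw [h0] at k
      linear_combination ((sbpZ M p)⁻¹ * p 0) * k
    · by_cases hMM : (j : ℕ) = M
      · simp only [if_neg h0, if_pos hMM]
        rw [hMM, div_eq_mul_inv, div_eq_mul_inv, one_div]
        have k := key j
        rw [hMM] at k
        linear_combination (-(sbpZ M p)⁻¹ * p M) * k
      · simp only [h0, hMM, if_false]
        ring
  refine ⟨main, fun j hj1 hj2 => ?_⟩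
  rw [main j, if_neg (by omega), if_neg (by omega), mul_zero]
end

section
/- Sandwiching identity: Let F be a d_A × d_A complex matrix and r, l ∈ ℂ^{d_A} satisfy the moment-matching condition l† F^k r = 1 for every integer k ≥ 0. Let A, K, B_1, …, B_J be N × N complex matrices, and define on ℂ^{d_A} ⊗ ℂ^N the dilated operators V_0 := I_A ⊗ A + (F − I_A) ⊗ K and V_j := I_A ⊗ B_j for 1 ≤ j ≤ J, and set B_0 := A. Then for every k ≥ 1 and every word α_1, …, α_k ∈ {0, 1, …, J}: (l† ⊗ I_N) · V_{α_k} ⋯ V_{α_1} · (r ⊗ I_N) = B_{α_k} ⋯ B_{α_1}. -/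
open Matrix Kronecker

/-- The dilated operators: `V_0 = I_A ⊗ A + (F − I_A) ⊗ K` and `V_j = I_A ⊗ B_j`. -/
noncomputable def dilV {dA N J : ℕ} (F : Matrix (Fin dA) (Fin dA) ℂ)
    (A K : Matrix (Fin N) (Fin N) ℂ) (B : Fin J → Matrix (Fin N) (Fin N) ℂ) :
    Fin (J + 1) → Matrix (Fin dA × Fin N) (Fin dA × Fin N) ℂ :=
  Fin.cases ((1 : Matrix (Fin dA) (Fin dA) ℂ) ⊗ₖ A +
      (F - (1 : Matrix (Fin dA) (Fin dA) ℂ)) ⊗ₖ K)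
    (fun j => (1 : Matrix (Fin dA) (Fin dA) ℂ) ⊗ₖ B j)

/-- The original SDE coefficients, with `B_0 := A`. -/
noncomputable def sdeB {N J : ℕ} (A : Matrix (Fin N) (Fin N) ℂ)
    (B : Fin J → Matrix (Fin N) (Fin N) ℂ) : Fin (J + 1) → Matrix (Fin N) (Fin N) ℂ :=
  Fin.cases A B

/-- The readout map `l† ⊗ I_N : ℂ^{d_A} ⊗ ℂ^N → ℂ^N`, as a matrix. -/
noncomputable def readL {dA N : ℕ} (l : Fin dA → ℂ) :
    Matrix (Fin N) (Fin dA × Fin N) ℂ :=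
  Matrix.of fun i p => star (l p.1) * (if p.2 = i then 1 else 0)

/-- The embedding `r ⊗ I_N : ℂ^N → ℂ^{d_A} ⊗ ℂ^N`, as a matrix. -/
noncomputable def embedR {dA N : ℕ} (r : Fin dA → ℂ) :
    Matrix (Fin dA × Fin N) (Fin N) ℂ :=
  Matrix.of fun p i => r p.1 * (if p.2 = i then 1 else 0)

/-! Write `V_0 = I_A ⊗ (A - K) + F ⊗ K`. Prove more generally that inserting `F^m ⊗ I_N` after
`l† ⊗ I_N` does not change the sandwiched word, by induction on the word with `m` arbitrary: a
letter `0` splits the sandwich into `(A - K)` times the word at power `m` plus `K` times the word at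
power `m + 1`, both equal to the shorter product of coefficients by induction, so they recombine
to `A`. The empty word gives `l† F^m r = 1`, the moment-matching condition. -/

section Sandwich

variable {dA N : ℕ}

lemma readL_mul_one_kronecker (l : Fin dA → ℂ) (M : Matrix (Fin N) (Fin N) ℂ) :
    readL (N := N) l * ((1 : Matrix (Fin dA) (Fin dA) ℂ) ⊗ₖ M) = M * readL (N := N) l := by
  ext i p
  simp [readL, Matrix.mul_apply, Fintype.sum_prod_type, kroneckerMap_apply,
    Matrix.one_apply, mul_comm, mul_ite, ite_mul, Finset.sum_ite_eq']

lemma readL_mul_kronecker (l : Fin dA → ℂ) (G : Matrix (Fin dA) (Fin dA) ℂ)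
    (M : Matrix (Fin N) (Fin N) ℂ) :
    readL (N := N) l * (G ⊗ₖ M) =
      M * (readL (N := N) l * (G ⊗ₖ (1 : Matrix (Fin N) (Fin N) ℂ))) := by
  have hsplit : G ⊗ₖ M = ((1 : Matrix (Fin dA) (Fin dA) ℂ) ⊗ₖ M) * (G ⊗ₖ 1) := by
    rw [← mul_kronecker_mul, one_mul, mul_one]
  rw [hsplit, ← Matrix.mul_assoc, readL_mul_one_kronecker, Matrix.mul_assoc]

lemma kronecker_one_mul_embedR (r : Fin dA → ℂ) (G : Matrix (Fin dA) (Fin dA) ℂ) :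
    (G ⊗ₖ (1 : Matrix (Fin N) (Fin N) ℂ)) * embedR (N := N) r = embedR (G *ᵥ r) := by
  ext p i
  simp [embedR, Matrix.mul_apply, Fintype.sum_prod_type, kroneckerMap_apply,
    Matrix.one_apply, Matrix.mulVec, dotProduct, mul_ite, ite_mul,
    Finset.sum_ite_eq']

lemma readL_mul_embedR (l r : Fin dA → ℂ) :
    readL (N := N) l * embedR (N := N) r = (star l ⬝ᵥ r) • (1 : Matrix (Fin N) (Fin N) ℂ) := by
  ext i j
  simp [readL, embedR, Matrix.mul_apply, Fintype.sum_prod_type, dotProduct,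
    Matrix.one_apply, mul_ite, ite_mul, Finset.sum_ite_eq',
    Matrix.smul_apply, smul_eq_mul, mul_comm]

end Sandwich

section Dilation

variable {dA N J : ℕ} (F : Matrix (Fin dA) (Fin dA) ℂ)
  (A K : Matrix (Fin N) (Fin N) ℂ) (B : Fin J → Matrix (Fin N) (Fin N) ℂ)

lemma pow_kronecker_one_mul_dilV_zero (m : ℕ) :
    ((F ^ m) ⊗ₖ (1 : Matrix (Fin N) (Fin N) ℂ)) * dilV F A K B 0 =
      (F ^ m) ⊗ₖ (A - K) + (F ^ (m + 1)) ⊗ₖ K := by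
  have hV : dilV F A K B 0 = (1 : Matrix (Fin dA) (Fin dA) ℂ) ⊗ₖ (A - K) + F ⊗ₖ K := by
    ext p q
    simp only [dilV, Fin.cases_zero, Matrix.add_apply, Matrix.sub_apply, kroneckerMap_apply]
    ring
  rw [hV, Matrix.mul_add, ← mul_kronecker_mul, ← mul_kronecker_mul, ← pow_succ, mul_one,
    one_mul, one_mul]

lemma pow_kronecker_one_mul_dilV_succ (m : ℕ) (j : Fin J) :
    ((F ^ m) ⊗ₖ (1 : Matrix (Fin N) (Fin N) ℂ)) * dilV F A K B j.succ = (F ^ m) ⊗ₖ B j := by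
  rw [dilV, Fin.cases_succ, ← mul_kronecker_mul, mul_one, one_mul]

lemma readL_pow_kronecker_one_mul_prod_mul_embedR {r l : Fin dA → ℂ}
    (hmoment : ∀ k : ℕ, star l ⬝ᵥ (F ^ k *ᵥ r) = 1) (w : List (Fin (J + 1))) (m : ℕ) :
    readL (N := N) l * ((F ^ m) ⊗ₖ (1 : Matrix (Fin N) (Fin N) ℂ)) *
        (w.map (dilV F A K B)).prod * embedR (N := N) r =
      (w.map (sdeB A B)).prod := by
  induction w generalizing m with
  | nil =>
    rw [List.map_nil, List.prod_nil, Matrix.mul_one, Matrix.mul_assoc, kronecker_one_mul_embedR,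
      readL_mul_embedR, hmoment, one_smul, List.map_nil, List.prod_nil]
  | cons a w ih =>
    simp only [List.map_cons, List.prod_cons]
    rw [← Matrix.mul_assoc, Matrix.mul_assoc (readL l)]
    cases a using Fin.cases with
    | zero =>
      rw [pow_kronecker_one_mul_dilV_zero, Matrix.mul_add, readL_mul_kronecker l _ (A - K),
        readL_mul_kronecker l _ K, Matrix.add_mul, Matrix.add_mul, Matrix.mul_assoc (A - K),
        Matrix.mul_assoc (A - K), Matrix.mul_assoc K, Matrix.mul_assoc K, ih, ih, ← Matrix.add_mul,
        sub_add_cancel, sdeB, Fin.cases_zero]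
    | succ j =>
      rw [pow_kronecker_one_mul_dilV_succ, readL_mul_kronecker, Matrix.mul_assoc (B j),
        Matrix.mul_assoc (B j), ih, sdeB, Fin.cases_succ]

end Dilation

theorem dilation_sandwich_general (dA N J : ℕ)
    (F : Matrix (Fin dA) (Fin dA) ℂ) (r l : Fin dA → ℂ)
    (hmm : ∀ k : ℕ, star l ⬝ᵥ (F ^ k *ᵥ r) = 1)
    (A K : Matrix (Fin N) (Fin N) ℂ) (B : Fin J → Matrix (Fin N) (Fin N) ℂ)
    (k : ℕ) (α : Fin k → Fin (J + 1)) :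
    readL (N := N) l * (List.ofFn fun i => dilV F A K B (α i)).prod * embedR (N := N) r =
      (List.ofFn fun i => sdeB A B (α i)).prod := by
  have h := readL_pow_kronecker_one_mul_prod_mul_embedR F A K B hmm (List.ofFn α) 0
  rwa [pow_zero, one_kronecker_one, Matrix.mul_one, List.map_ofFn, List.map_ofFn] at h

/-- **Sandwiching identity.** If `(F, r, l)` is a moment-matching triple,
then for every word `α` in the alphabet `{0, 1, …, J}` the sandwiched product of dilated
operators equals the corresponding product of original coefficients:
`(l† ⊗ I_N) V_{α_k} ⋯ V_{α_1} (r ⊗ I_N) = B_{α_k} ⋯ B_{α_1}`. -/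
theorem dilation_sandwich (dA N J : ℕ) (hdA : 1 ≤ dA) (hN : 1 ≤ N)
    (F : Matrix (Fin dA) (Fin dA) ℂ) (r l : Fin dA → ℂ)
    (hmm : ∀ k : ℕ, star l ⬝ᵥ (F ^ k *ᵥ r) = 1)
    (A K : Matrix (Fin N) (Fin N) ℂ) (B : Fin J → Matrix (Fin N) (Fin N) ℂ)
    (k : ℕ) (hk : 1 ≤ k) (α : Fin k → Fin (J + 1)) :
    readL (N := N) l * (List.ofFn fun i => dilV F A K B (α i)).prod * embedR (N := N) r =
      (List.ofFn fun i => sdeB A B (α i)).prod :=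
  dilation_sandwich_general dA N J F r l hmm A K B k α
end

section
/- Even/odd power structure of the interaction generator: Let S be a finite nonempty index set, N ≥ 1, and work on ℂ^{1+|S|} ⊗ ℂ^N with orthonormal ancilla basis {e_0} ∪ {e_α : α ∈ S}. Given matrices G_α ∈ ℂ^{N×N}, define Ω := Σ_{α∈S} ( e_α e_0† ⊗ G_α − e_0 e_α† ⊗ G_α† ) and R² := Σ_{α∈S} G_α† G_α. Then for every integer q ≥ 0 and every ψ ∈ ℂ^N: Ω^{2q} (e_0 ⊗ ψ) = (−1)^q · e_0 ⊗ ( (R²)^q ψ ) and Ω^{2q+1} (e_0 ⊗ ψ) = (−1)^q · Σ_{α∈S} e_α ⊗ ( G_α (R²)^q ψ ). -/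
open Matrix Kronecker

/-- The interaction generator
`Ω := Σ_{α∈S} (e_α e_0† ⊗ G_α − e_0 e_α† ⊗ G_α†)` on the ancilla space with basis
`{e_0} ∪ {e_α : α ∈ S}` (index type `Option S`, with `none` playing the role of `e_0`). -/
noncomputable def repIntGen {S : Type*} [Fintype S] [DecidableEq S] {N : ℕ}
    (G : S → Matrix (Fin N) (Fin N) ℂ) :
    Matrix (Option S × Fin N) (Option S × Fin N) ℂ :=
  ∑ α : S,
    (Matrix.single (some α) (none : Option S) (1 : ℂ) ⊗ₖ G α -
      Matrix.single (none : Option S) (some α) (1 : ℂ) ⊗ₖ (G α)ᴴ)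

/-- `R² := Σ_{α∈S} G_α† G_α`. -/
noncomputable def repIntR2 {S : Type*} [Fintype S] {N : ℕ}
    (G : S → Matrix (Fin N) (Fin N) ℂ) : Matrix (Fin N) (Fin N) ℂ :=
  ∑ α : S, (G α)ᴴ * G α

/-- The embedding `e_0 ⊗ ψ` of a system vector into the dilated space. -/
def e0Embed {S : Type*} {N : ℕ} (ψ : Fin N → ℂ) : Option S × Fin N → ℂ :=
  fun p => match p.1 with
    | none => ψ p.2
    | some _ => 0

/-- The vector `Σ_{α∈S} e_α ⊗ (φ α)` with no `e_0` component. -/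
def excitedEmbed {S : Type*} {N : ℕ} (φ : S → Fin N → ℂ) : Option S × Fin N → ℂ :=
  fun p => match p.1 with
    | none => 0
    | some α => φ α p.2

/-!
`Ω` sends `e_0 ⊗ ψ` to `Σ_α e_α ⊗ G_α ψ` and sends `Σ_α e_α ⊗ φ_α` back to
`-e_0 ⊗ Σ_α G_α† φ_α`, so `Ω²` acts on `e_0 ⊗ ℂ^N` as `-R²`; induction on `q` gives the even
powers, and one more application of `Ω` the odd ones.
-/

theorem single_one_kronecker_mulVec_apply {R m n : Type*} [CommSemiring R] [Fintype m]
    [DecidableEq m] [Fintype n] (a b : m) (A : Matrix n n R) (v : m × n → R) (x : m) (i : n) :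
    ((single a b (1 : R) ⊗ₖ A) *ᵥ v) (x, i) = if x = a then (A *ᵥ fun j => v (b, j)) i else 0 := by
  simp only [mulVec, dotProduct, Fintype.sum_prod_type, kroneckerMap_apply, single_apply]
  split_ifs with h
  · simp [h]
  · simp [Ne.symm h]

section

variable {S : Type*} [Fintype S] [DecidableEq S] {N : ℕ} (G : S → Matrix (Fin N) (Fin N) ℂ)

theorem repIntGen_mulVec_apply (v : Option S × Fin N → ℂ) (x : Option S) (i : Fin N) :
    (repIntGen G *ᵥ v) (x, i) =
      ∑ α : S, ((if x = some α then (G α *ᵥ fun j => v (none, j)) i else 0) -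
        if x = none then ((G α)ᴴ *ᵥ fun j => v (some α, j)) i else 0) := by
  simp only [repIntGen, sum_mulVec, sub_mulVec, Finset.sum_apply, Pi.sub_apply,
    single_one_kronecker_mulVec_apply]

theorem repIntGen_mulVec_e0Embed (ψ : Fin N → ℂ) :
    repIntGen G *ᵥ e0Embed ψ = excitedEmbed fun α => G α *ᵥ ψ := by
  ext ⟨x, i⟩
  rw [repIntGen_mulVec_apply]
  cases x <;> simp [e0Embed, excitedEmbed, ← Pi.zero_def]

theorem repIntGen_mulVec_excitedEmbed (φ : S → Fin N → ℂ) :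
    repIntGen G *ᵥ excitedEmbed φ = -e0Embed (∑ α, (G α)ᴴ *ᵥ φ α) := by
  ext ⟨x, i⟩
  rw [repIntGen_mulVec_apply]
  cases x <;> simp [e0Embed, excitedEmbed, ← Pi.zero_def]

theorem repIntGen_sq_mulVec_e0Embed (ψ : Fin N → ℂ) :
    repIntGen G ^ 2 *ᵥ e0Embed ψ = -e0Embed (repIntR2 G *ᵥ ψ) := by
  rw [pow_two, ← mulVec_mulVec, repIntGen_mulVec_e0Embed, repIntGen_mulVec_excitedEmbed,
    repIntR2, sum_mulVec]
  simp only [mulVec_mulVec]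

theorem repIntGen_pow_two_mul_mulVec_e0Embed (q : ℕ) (ψ : Fin N → ℂ) :
    repIntGen G ^ (2 * q) *ᵥ e0Embed ψ = (-1 : ℂ) ^ q • e0Embed (repIntR2 G ^ q *ᵥ ψ) := by
  induction q generalizing ψ with
  | zero => simp
  | succ q ih =>
    rw [mul_add, mul_one, pow_add, ← mulVec_mulVec, repIntGen_sq_mulVec_e0Embed, mulVec_neg, ih,
      mulVec_mulVec, ← pow_succ, pow_succ (-1 : ℂ), mul_neg_one, neg_smul]

end

theorem interaction_generator_powers_general {S : Type*} [Fintype S] [DecidableEq S]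
    (N : ℕ) (G : S → Matrix (Fin N) (Fin N) ℂ) (q : ℕ) (ψ : Fin N → ℂ) :
    (repIntGen G ^ (2 * q)) *ᵥ e0Embed ψ =
      ((-1 : ℂ) ^ q) • e0Embed ((repIntR2 G ^ q) *ᵥ ψ) ∧
    (repIntGen G ^ (2 * q + 1)) *ᵥ e0Embed ψ =
      ((-1 : ℂ) ^ q) • excitedEmbed (fun α => (G α * repIntR2 G ^ q) *ᵥ ψ) := by
  have even := repIntGen_pow_two_mul_mulVec_e0Embed G q ψ
  refine ⟨even, ?_⟩
  rw [pow_succ', ← mulVec_mulVec, even, mulVec_smul, repIntGen_mulVec_e0Embed]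
  simp only [mulVec_mulVec]

/-- **Even/odd power structure of the interaction generator.**
`Ω^{2q}(e_0 ⊗ ψ) = (−1)^q e_0 ⊗ ((R²)^q ψ)` and
`Ω^{2q+1}(e_0 ⊗ ψ) = (−1)^q Σ_α e_α ⊗ (G_α (R²)^q ψ)`. -/
theorem interaction_generator_powers {S : Type*} [Fintype S] [DecidableEq S] [Nonempty S]
    (N : ℕ) (hN : 1 ≤ N) (G : S → Matrix (Fin N) (Fin N) ℂ) (q : ℕ) (ψ : Fin N → ℂ) :
    (repIntGen G ^ (2 * q)) *ᵥ e0Embed ψ =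
      ((-1 : ℂ) ^ q) • e0Embed ((repIntR2 G ^ q) *ᵥ ψ) ∧
    (repIntGen G ^ (2 * q + 1)) *ᵥ e0Embed ψ =
      ((-1 : ℂ) ^ q) • excitedEmbed (fun α => (G α * repIntR2 G ^ q) *ᵥ ψ) :=
  interaction_generator_powers_general N G q ψ
end
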